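/- Let 0 < Γ ≤ 1, L ≥ 1, B ≥ 1, λ = B⁻², and let x₁, x₂, … ∈ ℝ^d with ‖xₖ‖₂ ≤ L. Suppose C ⊆ ℕ is a finite index set constructed so that for each k ∈ C, ‖xₖ‖_{U_k⁻¹} ≥ Γ where U_k = λI + ∑_{i∈C, i<k} xᵢxᵢᵀ. Then |C| ≤ 16·d·Γ⁻²·log(3LB/Γ). -/

import Mathlib

open Matrix Finset

lemma psd_vmv {d : ℕ} (v : Fin d → ℝ) : (vecMulVec v v).PosSemidef := by
  have h : vecMulVec v v = replicateCol Unit v * (replicateCol Unit v)ᴴ := by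
    rw [conjTranspose_replicateCol, vecMulVec_eq Unit]
    simp
  rw [h]
  exact posSemidef_self_mul_conjTranspose _

lemma det_add_vmv {d : ℕ} {A : Matrix (Fin d) (Fin d) ℝ} (hA : A.PosDef) (v : Fin d → ℝ) :
    (A + vecMulVec v v).det = A.det * (1 + v ⬝ᵥ (A⁻¹ *ᵥ v)) := by
  have hsym : ∀ i j, A⁻¹ i j = A⁻¹ j i := by
    intro i j
    conv_lhs => rw [← hA.inv.isHermitian.eq]
    simp [conjTranspose_apply]
  rw [vecMulVec_eq Unit, det_add_replicateCol_mul_replicateRow hA.det_pos.ne'.isUnit]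
  congr 1
  rw [det_unique]
  simp only [Matrix.add_apply, Matrix.one_apply_eq, Matrix.mul_apply, dotProduct, Matrix.mulVec,
    replicateRow_apply, replicateCol_apply, Finset.sum_mul, Finset.mul_sum]
  rw [Finset.sum_comm]
  congr 1
  refine Finset.sum_congr rfl fun i _ => Finset.sum_congr rfl fun j _ => ?_
  rw [hsym i j]; ring

noncomputable def Gmat {d : ℕ} (lam : ℝ) (x : ℕ → Fin d → ℝ) (s : Finset ℕ) :
    Matrix (Fin d) (Fin d) ℝ :=
  lam • (1 : Matrix (Fin d) (Fin d) ℝ) + ∑ i ∈ s, vecMulVec (x i) (x i)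

lemma Gmat_posDef {d : ℕ} {lam : ℝ} (hlam : 0 < lam) (x : ℕ → Fin d → ℝ) (s : Finset ℕ) :
    (Gmat lam x s).PosDef := by
  have h1 : (lam • (1 : Matrix (Fin d) (Fin d) ℝ)).PosDef := by
    rw [smul_one_eq_diagonal]
    exact Matrix.PosDef.diagonal fun _ => hlam
  exact h1.add_posSemidef <| Finset.sum_induction _ _ (fun a b ha hb => ha.add hb)
    Matrix.PosSemidef.zero (fun i _ => psd_vmv (x i))

lemma Gmat_trace {d : ℕ} (lam : ℝ) (x : ℕ → Fin d → ℝ) (s : Finset ℕ) :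
    (Gmat lam x s).trace = lam * d + ∑ i ∈ s, x i ⬝ᵥ x i := by
  rw [Gmat, trace_add, trace_smul, trace_one, trace_sum]
  simp [Matrix.trace, Matrix.diag, vecMulVec_apply, dotProduct, mul_comm]

lemma Gmat_logdet {d : ℕ} {lam : ℝ} (hlam : 0 < lam) (x : ℕ → Fin d → ℝ) (s : Finset ℕ) :
    Real.log (Gmat lam x s).det
      = d * Real.log lam
        + ∑ k ∈ s, Real.log (1 + x k ⬝ᵥ ((Gmat lam x (s.filter (· < k)))⁻¹ *ᵥ x k)) := by
  induction s using Finset.strongInduction with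
  | _ s ih =>
    rcases s.eq_empty_or_nonempty with rfl | hs
    · simp [Gmat, det_smul, Real.log_pow, det_one]
    · set m := s.max' hs with hm
      have hmem : m ∈ s := s.max'_mem hs
      have hfm : s.filter (· < m) = s.erase m := by
        ext i
        simp only [Finset.mem_filter, Finset.mem_erase]
        constructor
        · exact fun ⟨h1, h2⟩ => ⟨fun h => absurd (h ▸ h2) (lt_irrefl m), h1⟩
        · exact fun ⟨h1, h2⟩ => ⟨h2, lt_of_le_of_ne (s.le_max' i h2) h1⟩
      have hsplit : Gmat lam x s = Gmat lam x (s.erase m) + vecMulVec (x m) (x m) := by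
        rw [Gmat, Gmat, add_assoc]
        congr 1
        rw [← Finset.sum_erase_add s _ hmem]
      have hpd := Gmat_posDef hlam x (s.erase m)
      have hq : 0 ≤ x m ⬝ᵥ ((Gmat lam x (s.erase m))⁻¹ *ᵥ x m) := by
        have := hpd.inv.posSemidef.dotProduct_mulVec_nonneg (x m)
        simpa using this
      rw [hsplit, det_add_vmv hpd, Real.log_mul hpd.det_pos.ne' (by positivity),
        ih _ (Finset.erase_ssubset hmem)]
      rw [← Finset.sum_erase_add s _ hmem, hfm]
      have hfilter : ∀ k ∈ s.erase m, (s.erase m).filter (· < k) = s.filter (· < k) := by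
        intro k hk
        have hkm : k < m := lt_of_le_of_ne (s.le_max' k (Finset.mem_of_mem_erase hk))
          (Finset.ne_of_mem_erase hk)
        ext i
        simp only [Finset.mem_filter, Finset.mem_erase]
        constructor
        · exact fun ⟨h1, h2⟩ => ⟨h1.2, h2⟩
        · exact fun ⟨h1, h2⟩ => ⟨⟨fun h => absurd (h ▸ h2) (by omega), h1⟩, h2⟩
      rw [Finset.sum_congr rfl fun k hk => by rw [hfilter k hk]]
      ring



lemma trace_eq_sum_eig {d : ℕ} {A : Matrix (Fin d) (Fin d) ℝ} (hA : A.IsHermitian) :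
    A.trace = ∑ i, hA.eigenvalues i := by
  simpa using hA.trace_eq_sum_eigenvalues

lemma det_le_trace_pow {d : ℕ} (hd : 0 < d) {A : Matrix (Fin d) (Fin d) ℝ}
    (hA : A.PosSemidef) : A.det ≤ (A.trace / d) ^ d := by
  have hH := hA.isHermitian
  have hev := hA.eigenvalues_nonneg
  have hdet : A.det = ∏ i, hH.eigenvalues i := by
    have := hH.det_eq_prod_eigenvalues
    simpa using this
  have htr : A.trace = ∑ i, hH.eigenvalues i := trace_eq_sum_eig hH
  have hAM := Real.geom_mean_le_arith_mean_weighted Finset.univ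
    (fun _ : Fin d => (d : ℝ)⁻¹) hH.eigenvalues
    (fun i _ => by positivity)
    (by simp [Finset.card_univ]; field_simp)
    (fun i _ => hev i)
  have key : (∏ i, hH.eigenvalues i ^ ((d : ℝ)⁻¹)) ^ (d : ℕ) = ∏ i, hH.eigenvalues i := by
    rw [← Finset.prod_pow]
    refine Finset.prod_congr rfl fun i _ => ?_
    rw [← Real.rpow_natCast (hH.eigenvalues i ^ ((d:ℝ)⁻¹)) d, ← Real.rpow_mul (hev i),
      inv_mul_cancel₀ (by positivity), Real.rpow_one]
  calc A.det = (∏ i, hH.eigenvalues i ^ ((d : ℝ)⁻¹)) ^ (d : ℕ) := by rw [key, hdet]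
    _ ≤ (∑ i, (d:ℝ)⁻¹ * hH.eigenvalues i) ^ (d : ℕ) := by
        refine pow_le_pow_left₀ ?_ hAM d
        exact Finset.prod_nonneg fun i _ => Real.rpow_nonneg (hev i) _
    _ = (A.trace / d) ^ d := by
        rw [htr, ← Finset.mul_sum]
        ring_nf


lemma sq_le_two_log {Γ t : ℝ} (hΓ0 : 0 < Γ) (hΓ1 : Γ ≤ 1) (h : Γ^2 ≤ t) :
    Γ^2 ≤ 2 * Real.log (1 + t) := by
  have ht0 : 0 < t := lt_of_lt_of_le (by positivity) h
  rcases le_or_gt t 1 with ht1 | ht1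
  · -- log(1+t) ≥ t/(1+t) ≥ t/2
    have h1 : Real.log (1 + t)⁻¹ ≤ (1 + t)⁻¹ - 1 :=
      Real.log_le_sub_one_of_pos (by positivity)
    rw [Real.log_inv] at h1
    have hinv : (1 + t) * (1 + t)⁻¹ = 1 := mul_inv_cancel₀ (by positivity)
    have h2 : t / 2 ≤ Real.log (1 + t) := by
      nlinarith [h1, hinv, sq_nonneg t]
    nlinarith
  · have h2 : (1 : ℝ) ≤ 2 * Real.log 2 := by
      nlinarith [Real.log_two_gt_d9]
    have h3 : Real.log 2 ≤ Real.log (1 + t) :=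
      Real.log_le_log (by norm_num) (by linarith)
    nlinarith

lemma resolve_implicit {a X : ℝ} (ha : 1 ≤ a) (hX : 0 ≤ X)
    (h : X ≤ Real.log (1 + a * X)) : X ≤ 2 * Real.log (2 * a) + 1 / a := by
  by_contra hc
  push_neg at hc
  have ha0 : 0 < a := by linarith
  have hlog2a : 0 < Real.log (2 * a) := Real.log_pos (by linarith)
  have hXpos : 0 < X := lt_of_le_of_lt (by positivity) hc
  have haX : 1 ≤ a * X := by
    have h7 : 1 / a ≤ X := by linarith
    rw [div_le_iff₀ ha0] at h7
    linarith [h7]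
  -- log X ≤ X / 2
  have hsq : Real.sqrt X ^ 2 = X := Real.sq_sqrt hX
  have hlogX : Real.log X ≤ X / 2 := by
    have h1 : Real.log X = 2 * Real.log (Real.sqrt X) := by
      rw [Real.log_sqrt hX]; ring
    have h2 : Real.log (Real.sqrt X) ≤ Real.sqrt X - 1 :=
      Real.log_le_sub_one_of_pos (Real.sqrt_pos.mpr hXpos)
    nlinarith [sq_nonneg (Real.sqrt X - 2), Real.sqrt_nonneg X]
  have h4 : Real.log (1 + a * X) ≤ Real.log (2 * a * X) := by
    apply Real.log_le_log (by linarith)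
    nlinarith
  rw [Real.log_mul (by positivity) hXpos.ne'] at h4
  have : X ≤ Real.log (2 * a) + X / 2 := by linarith
  have h5 : X / 2 ≤ Real.log (2 * a) := by linarith
  have h6 : 0 < 1 / a := by positivity
  linarith


set_option maxHeartbeats 1000000 in
open Matrix in
theorem stmt_12 (d : ℕ) (Γ L B : ℝ) (hΓ : 0 < Γ) (hΓ1 : Γ ≤ 1)
    (hL : 1 ≤ L) (hB : 1 ≤ B) (lam : ℝ) (hlam : lam = B⁻¹ ^ 2)
    (x : ℕ → (Fin d → ℝ)) (hxL : ∀ k, Real.sqrt (x k ⬝ᵥ x k) ≤ L)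
    (C : Finset ℕ)
    (U : ℕ → Matrix (Fin d) (Fin d) ℝ)
    (hU : ∀ k, U k = lam • (1 : Matrix (Fin d) (Fin d) ℝ)
        + ∑ i ∈ C.filter (· < k), vecMulVec (x i) (x i))
    (hsel : ∀ k ∈ C, Real.sqrt (x k ⬝ᵥ ((U k)⁻¹ *ᵥ x k)) ≥ Γ) :
    (C.card : ℝ) ≤ 16 * d * Γ⁻¹ ^ 2 * Real.log (3 * L * B / Γ) := by
  classical
  have hB0 : (0:ℝ) < B := by linarith
  have hL0 : (0:ℝ) < L := by linarith
  have hlam0 : 0 < lam := by rw [hlam]; positivity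
  rcases Nat.eq_zero_or_pos d with hd0 | hdpos
  · subst hd0
    have hC : C = ∅ := by
      apply Finset.eq_empty_of_forall_notMem
      intro k hk
      have h := hsel k hk
      have hz : x k ⬝ᵥ ((U k)⁻¹ *ᵥ x k) = 0 := by
        simp [dotProduct]
      rw [hz, Real.sqrt_zero] at h
      linarith
    simp [hC]
  have hD : (0:ℝ) < (d:ℝ) := by exact_mod_cast hdpos
  set n : ℝ := (C.card : ℝ) with hn
  have hn0 : 0 ≤ n := by positivity
  have hUk : ∀ k, U k = Gmat lam x (C.filter (· < k)) := by
    intro k; rw [hU k, Gmat]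
  -- Step 1: Γ² ≤ quadratic form
  have key1 : ∀ k ∈ C, Γ^2 ≤ x k ⬝ᵥ ((U k)⁻¹ *ᵥ x k) := by
    intro k hk
    have h := hsel k hk
    have ht : 0 < x k ⬝ᵥ ((U k)⁻¹ *ᵥ x k) :=
      Real.sqrt_pos.mp (lt_of_lt_of_le hΓ h)
    nlinarith [Real.sq_sqrt ht.le, Real.sqrt_nonneg (x k ⬝ᵥ ((U k)⁻¹ *ᵥ x k))]
  -- Step 2: sum bound
  have step2 : n * Γ^2 ≤ ∑ k ∈ C, 2 * Real.log (1 + x k ⬝ᵥ ((U k)⁻¹ *ᵥ x k)) := by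
    calc n * Γ^2 = ∑ _k ∈ C, Γ^2 := by rw [Finset.sum_const, nsmul_eq_mul]
      _ ≤ _ := Finset.sum_le_sum fun k hk => sq_le_two_log hΓ hΓ1 (key1 k hk)
  -- Step 3: telescoping
  have step3 : ∑ k ∈ C, 2 * Real.log (1 + x k ⬝ᵥ ((U k)⁻¹ *ᵥ x k))
      = 2 * (Real.log (Gmat lam x C).det - d * Real.log lam) := by
    rw [← Finset.mul_sum]
    have := Gmat_logdet hlam0 x C
    rw [Finset.sum_congr rfl fun k _ => by rw [hUk k]]
    linarith [this]
  -- Step 4: trace bound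
  have htrace : (Gmat lam x C).trace ≤ lam * d + n * L^2 := by
    rw [Gmat_trace]
    have : ∑ i ∈ C, x i ⬝ᵥ x i ≤ ∑ _i ∈ C, L^2 := by
      refine Finset.sum_le_sum fun i _ => ?_
      have hnn : 0 ≤ x i ⬝ᵥ x i := Finset.sum_nonneg fun j _ => mul_self_nonneg _
      nlinarith [Real.sq_sqrt hnn, hxL i, Real.sqrt_nonneg (x i ⬝ᵥ x i)]
    rw [Finset.sum_const, nsmul_eq_mul] at this
    linarith
  have hpdC := Gmat_posDef hlam0 x C
  have htrpos : 0 < (Gmat lam x C).trace := by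
    rw [Gmat_trace]
    have : 0 ≤ ∑ i ∈ C, x i ⬝ᵥ x i :=
      Finset.sum_nonneg fun i _ => Finset.sum_nonneg fun j _ => mul_self_nonneg _
    nlinarith
  -- Step 5: det ≤ ((lam d + n L²)/d)^d and take logs
  have step5 : Real.log (Gmat lam x C).det ≤ d * Real.log ((lam * d + n * L^2) / d) := by
    have h1 := det_le_trace_pow hdpos hpdC.posSemidef
    have h2 : (Gmat lam x C).det ≤ ((lam * d + n * L^2) / d) ^ d := by
      refine h1.trans (pow_le_pow_left₀ (by positivity) ?_ d)
      gcongr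
    calc Real.log (Gmat lam x C).det ≤ Real.log (((lam * d + n * L^2) / d) ^ d) :=
          Real.log_le_log hpdC.det_pos h2
      _ = d * Real.log ((lam * d + n * L^2) / d) := by rw [Real.log_pow]
  -- Step 6: combine into implicit inequality
  have harg : (lam * d + n * L^2) / d / lam = 1 + n * L^2 * B^2 / d := by
    rw [hlam]; field_simp
  have step6 : n * Γ^2 ≤ 2 * d * Real.log (1 + n * L^2 * B^2 / d) := by
    have hlogdiff : Real.log ((lam * d + n * L^2) / d) - Real.log lam
        = Real.log (1 + n * L^2 * B^2 / d) := by
      rw [← Real.log_div (by positivity) hlam0.ne', harg]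
    nlinarith [step2, step3, step5, hlogdiff]
  -- Step 7: resolve
  set a : ℝ := 2 * L^2 * B^2 / Γ^2 with ha_def
  set X : ℝ := n * Γ^2 / (2 * d) with hX_def
  have haX : a * X = n * L^2 * B^2 / d := by
    rw [ha_def, hX_def]; field_simp
  have ha1 : 1 ≤ a := by
    have hL2 : 1 ≤ L^2 := by nlinarith
    have hB2 : 1 ≤ B^2 := by nlinarith
    have hΓ2 : Γ^2 ≤ 1 := by nlinarith
    rw [ha_def, le_div_iff₀ (by positivity)]
    nlinarith
  have hX0 : 0 ≤ X := by rw [hX_def]; positivity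
  have hXle : X ≤ Real.log (1 + a * X) := by
    rw [haX, hX_def, div_le_iff₀ (by positivity)]
    nlinarith [step6]
  have hres := resolve_implicit ha1 hX0 hXle
  -- Step 8: final arithmetic
  have h2a : 2 * a = (2 * L * B / Γ)^2 := by
    rw [ha_def]; field_simp
  have hlog2a : Real.log (2 * a) = 2 * Real.log (2 * L * B / Γ) := by
    rw [h2a, Real.log_pow]; norm_num
  have hlogmono : Real.log (2 * L * B / Γ) ≤ Real.log (3 * L * B / Γ) := by
    apply Real.log_le_log (by positivity)
    gcongr
    nlinarith
  have hlog3 : 1 ≤ Real.log (3 * L * B / Γ) := by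
    have h9 : Real.exp 1 ≤ 3 * L * B / Γ := by
      have h10 : (3:ℝ) ≤ 3 * L * B / Γ := by
        rw [le_div_iff₀ hΓ]; nlinarith
      nlinarith [Real.exp_one_lt_d9]
    rw [show (1:ℝ) = Real.log (Real.exp 1) by rw [Real.log_exp]]
    exact Real.log_le_log (Real.exp_pos 1) h9
  have h1a : 1 / a ≤ 1 := (div_le_one (lt_of_lt_of_le one_pos ha1)).mpr ha1
  have hfin : n * Γ^2 ≤ 16 * d * Real.log (3 * L * B / Γ) := by
    rw [hlog2a] at hres
    rw [hX_def, div_le_iff₀ (by positivity)] at hres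
    nlinarith [mul_nonneg hD.le (sub_nonneg.mpr hlogmono),
      mul_nonneg hD.le (sub_nonneg.mpr h1a),
      mul_nonneg hD.le (sub_nonneg.mpr hlog3)]
  have hΓ2 : (0:ℝ) < Γ^2 := by positivity
  calc n = n * Γ^2 * Γ⁻¹^2 := by
        rw [inv_pow]; field_simp
    _ ≤ 16 * d * Real.log (3 * L * B / Γ) * Γ⁻¹^2 :=
        mul_le_mul_of_nonneg_right hfin (by positivity)
    _ = 16 * d * Γ⁻¹^2 * Real.log (3 * L * B / Γ) := by ring
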